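/- The cross-dimensional addition is well-defined on equivalence classes: if x ↔ x' and y ↔ y', then (x ⊕ y) ↔ (x' ⊕ y'), where x ⊕ y := (x ⊗ 1_{t/m}) + (y ⊗ 1_{t/n}) with t = lcm(m,n). -/

import Mathlib

/-!
Stretching `x ∈ ℝ^m` to a multiple `t` of `m` (`stretch x t = x ⊗ 1_{t/m}`) is compatible with
further stretching, and it is additive. So `x ↔ x'` says exactly that `x` and `x'` have equal
stretches to some positive common multiple `N` of their dimensions, and then also to every multiple
of `N`. Given such `N₁` for `x ↔ x'` and `N₂` for `y ↔ y'`, both sums `x ⊕ y` and `x' ⊕ y'`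
stretch to `lcm N₁ N₂` as the sum of the stretches of their summands, which agree.
-/

open Matrix

noncomputable section

/-- All-ones vector in `ℝ^k`. -/
def ones (k : ℕ) : Fin k → ℝ := fun _ => 1

/-- Kronecker product of two vectors (column vectors). -/
def vkron {m k : ℕ} (x : Fin m → ℝ) (y : Fin k → ℝ) : Fin (m * k) → ℝ :=
  fun i => x (finProdFinEquiv.symm i).1 * y (finProdFinEquiv.symm i).2

/-- `J_k`: the `k × k` matrix all of whose entries are `1/k`. -/
def Jmat (k : ℕ) : Matrix (Fin k) (Fin k) ℝ := Matrix.of fun _ _ => (k : ℝ)⁻¹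

/-- Kronecker product of matrices. -/
def mkron {m n p q : ℕ} (A : Matrix (Fin m) (Fin n) ℝ) (B : Matrix (Fin p) (Fin q) ℝ) :
    Matrix (Fin (m * p)) (Fin (n * q)) ℝ :=
  Matrix.of fun i j =>
    A (finProdFinEquiv.symm i).1 (finProdFinEquiv.symm j).1 *
    B (finProdFinEquiv.symm i).2 (finProdFinEquiv.symm j).2

/-- Mixed-dimensional vectors. -/
def MVec := Σ n : ℕ, Fin n → ℝ

/-- Vector equivalence: `x ↔ y` iff `x ⊗ 1_α = y ⊗ 1_β` for some `α, β ≥ 1`. -/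
def vequiv (x y : MVec) : Prop :=
  ∃ α β : ℕ, 0 < α ∧ 0 < β ∧ ∃ h : x.1 * α = y.1 * β,
    ∀ i, vkron x.2 (ones α) i = vkron y.2 (ones β) (Fin.cast h i)


/-- Stretch a vector `x ∈ ℝ^m` to dimension `t` (meaningful when `m ∣ t`),
as `x ⊗ 1_{t/m}`. -/
def stretch {m : ℕ} (x : Fin m → ℝ) (t : ℕ) : Fin t → ℝ :=
  fun i => if h : m * (t / m) = t then vkron x (ones (t / m)) (Fin.cast h.symm i) else 0

/-- Cross-dimensional addition `x ⊕ y := (x ⊗ 1_{t/m}) + (y ⊗ 1_{t/n})`, `t = lcm(m,n)`. -/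
def vaddc {m n : ℕ} (x : Fin m → ℝ) (y : Fin n → ℝ) : Fin (Nat.lcm m n) → ℝ :=
  fun i => stretch x (Nat.lcm m n) i + stretch y (Nat.lcm m n) i

lemma vkron_ones_apply {m k : ℕ} (x : Fin m → ℝ) (i : Fin (m * k)) :
    vkron x (ones k) i = x i.divNat := by
  simp [vkron, ones, finProdFinEquiv]

lemma stretch_cast {m t t' : ℕ} (x : Fin m → ℝ) (h : t = t') (i : Fin t) :
    stretch x t' (Fin.cast h i) = stretch x t i := by
  subst h
  rfl

lemma stretch_mul {m : ℕ} (x : Fin m → ℝ) (k : ℕ) : stretch x (m * k) = vkron x (ones k) := by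
  funext i
  have hm : 0 < m := Nat.pos_of_mul_pos_right i.pos
  have hk : m * k / m = k := Nat.mul_div_cancel_left k hm
  rw [stretch, dif_pos (by rw [hk])]
  simp only [vkron_ones_apply]
  congr 1
  ext
  simp [hk]

lemma stretch_stretch {m t T : ℕ} (hmt : m ∣ t) (htT : t ∣ T) (x : Fin m → ℝ) :
    stretch (stretch x t) T = stretch x T := by
  obtain ⟨a, rfl⟩ := hmt
  obtain ⟨b, rfl⟩ := htT
  funext j
  rw [← stretch_cast x (Nat.mul_assoc m a b), stretch_mul, stretch_mul, stretch_mul]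
  simp only [vkron_ones_apply]
  congr 1
  ext
  simp [Nat.div_div_eq_div_mul, Nat.mul_comm]

lemma stretch_add {m : ℕ} (f g : Fin m → ℝ) (t : ℕ) :
    stretch (f + g) t = stretch f t + stretch g t := by
  funext i
  simp only [stretch, Pi.add_apply]
  split_ifs <;> simp [vkron, add_mul]

lemma stretch_vaddc {m n N : ℕ} (x : Fin m → ℝ) (y : Fin n → ℝ) (hN : Nat.lcm m n ∣ N) :
    stretch (vaddc x y) N = stretch x N + stretch y N := by
  change stretch (stretch x _ + stretch y _) N = _
  rw [stretch_add, stretch_stretch (Nat.dvd_lcm_left m n) hN,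
    stretch_stretch (Nat.dvd_lcm_right m n) hN]

lemma stretch_eq_of_dvd {m m' N M : ℕ} {x : Fin m → ℝ} {x' : Fin m' → ℝ} (hm : m ∣ N)
    (hm' : m' ∣ N) (hNM : N ∣ M) (h : stretch x N = stretch x' N) :
    stretch x M = stretch x' M := by
  rw [← stretch_stretch hm hNM, h, stretch_stretch hm' hNM]

lemma exists_stretch_eq_of_vequiv {m m' : ℕ} {x : Fin m → ℝ} {x' : Fin m' → ℝ} (hm : 0 < m)
    (h : vequiv ⟨m, x⟩ ⟨m', x'⟩) :
    ∃ N, 0 < N ∧ m ∣ N ∧ m' ∣ N ∧ stretch x N = stretch x' N := by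
  obtain ⟨α, β, hα, -, hαβ, he⟩ := h
  refine ⟨m * α, Nat.mul_pos hm hα, dvd_mul_right m α, hαβ ▸ dvd_mul_right m' β,
    funext fun i => ?_⟩
  rw [stretch_mul, he, ← stretch_mul, stretch_cast]

lemma vequiv_of_stretch_eq {m m' N : ℕ} {x : Fin m → ℝ} {x' : Fin m' → ℝ} (hN : 0 < N)
    (hm : m ∣ N) (hm' : m' ∣ N) (h : stretch x N = stretch x' N) :
    vequiv ⟨m, x⟩ ⟨m', x'⟩ := by
  obtain ⟨a, rfl⟩ := hm
  obtain ⟨b, hab⟩ := hm'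
  refine ⟨a, b, Nat.pos_of_mul_pos_left hN, Nat.pos_of_mul_pos_left (hab ▸ hN), hab,
    fun i => ?_⟩
  rw [← stretch_mul, ← stretch_mul, stretch_cast, h]

theorem vaddc_well_defined_general (m n m' n' : ℕ)
    (hm : 0 < m) (hn : 0 < n)
    (x : Fin m → ℝ) (y : Fin n → ℝ) (x' : Fin m' → ℝ) (y' : Fin n' → ℝ)
    (hx : vequiv ⟨m, x⟩ ⟨m', x'⟩) (hy : vequiv ⟨n, y⟩ ⟨n', y'⟩) :
    vequiv ⟨Nat.lcm m n, vaddc x y⟩ ⟨Nat.lcm m' n', vaddc x' y'⟩ := by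
  obtain ⟨N₁, hN₁, hmN₁, hm'N₁, hx⟩ := exists_stretch_eq_of_vequiv hm hx
  obtain ⟨N₂, hN₂, hnN₂, hn'N₂, hy⟩ := exists_stretch_eq_of_vequiv hn hy
  have h₁ : N₁ ∣ N₁.lcm N₂ := Nat.dvd_lcm_left N₁ N₂
  have h₂ : N₂ ∣ N₁.lcm N₂ := Nat.dvd_lcm_right N₁ N₂
  have hL : m.lcm n ∣ N₁.lcm N₂ := Nat.lcm_dvd (hmN₁.trans h₁) (hnN₂.trans h₂)
  have hL' : m'.lcm n' ∣ N₁.lcm N₂ := Nat.lcm_dvd (hm'N₁.trans h₁) (hn'N₂.trans h₂)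
  refine vequiv_of_stretch_eq (Nat.lcm_pos hN₁ hN₂) hL hL' ?_
  rw [stretch_vaddc x y hL, stretch_vaddc x' y' hL', stretch_eq_of_dvd hmN₁ hm'N₁ h₁ hx,
    stretch_eq_of_dvd hnN₂ hn'N₂ h₂ hy]

/-- cross-dimensional addition is well defined on equivalence
classes: if `x ↔ x'` and `y ↔ y'` then `(x ⊕ y) ↔ (x' ⊕ y')`. -/
theorem vaddc_well_defined (m n m' n' : ℕ)
    (hm : 0 < m) (hn : 0 < n) (hm' : 0 < m') (hn' : 0 < n')
    (x : Fin m → ℝ) (y : Fin n → ℝ) (x' : Fin m' → ℝ) (y' : Fin n' → ℝ)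
    (hx : vequiv ⟨m, x⟩ ⟨m', x'⟩) (hy : vequiv ⟨n, y⟩ ⟨n', y'⟩) :
    vequiv ⟨Nat.lcm m n, vaddc x y⟩ ⟨Nat.lcm m' n', vaddc x' y'⟩ :=
  vaddc_well_defined_general m n m' n' hm hn x y x' y' hx hy
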